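/- Let t_bl, t₂ : ℚ³ → ℚ be the cubic forms t_bl(A,B,C) = (2/3)A³ + 3A²B − 3AB² + B³ + C³ and t₂(A,B,C) = A³ + (9/2)A²B − (9/2)AB² + B³ − (3/2)B²C − (3/2)BC² + C³. Then there is no invertible ℚ-linear map L : ℚ³ → ℚ³ and nonzero scalar λ ∈ ℚ such that t_bl(x) = λ·t₂(L(x)) for all x ∈ ℚ³. (Consequently, smooth members of the family 𝒳_bl, whose cup-product trilinear form on H² is t_bl, cannot be homeomorphic to smooth members of the Batyrev family 𝒳(Δ₂), whose trilinear form is t₂.) -/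
import Mathlib


/-- The cubic form `t_bl` of the family `𝒳_bl`, as a function on `ℚ³`. -/
def tblForm (x : Fin 3 → ℚ) : ℚ :=
  2 / 3 * (x 0) ^ 3 + 3 * (x 0) ^ 2 * (x 1) - 3 * (x 0) * (x 1) ^ 2 + (x 1) ^ 3 + (x 2) ^ 3

/-- The cubic form `t₂` of the Batyrev family `𝒳(Δ₂)`, as a function on `ℚ³`. -/
def t2Form (x : Fin 3 → ℚ) : ℚ :=
  (x 0) ^ 3 + 9 / 2 * (x 0) ^ 2 * (x 1) - 9 / 2 * (x 0) * (x 1) ^ 2 + (x 1) ^ 3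
    - 3 / 2 * (x 1) ^ 2 * (x 2) - 3 / 2 * (x 1) * (x 2) ^ 2 + (x 2) ^ 3

/-- Over `ZMod 7`, the six quartic equations force the trivial solution. -/
lemma zmod7_only_trivial : ∀ a b c : ZMod 7,
    (135)*a^2*b^2 + (-117)*a*b^3 + (54)*a*b^2*c + (54)*a*b*c^2 + (-36)*a*c^3 + (27)*b^4 + (81)*b^3*c + (81)*b^2*c^2 + (-54)*b*c^3 = 0 →
    (135)*a^4 + (-117)*a^3*b + (18)*a^3*c + (27)*a^2*b^2 + (-27)*a^2*b*c + (-54)*a^2*c^2 + (54)*a*b^2*c + (27)*a*b*c^2 + (54)*a*c^3 + (27)*b^2*c^2 + (-27)*b*c^3 + (27)*c^4 = 0 →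
    (18)*a^3*b + (-36)*a^3*c + (81)*a^2*b^2 + (-162)*a^2*b*c + (-81)*a*b^3 + (162)*a*b^2*c + (27)*b^4 + (-27)*b^3*c + (27)*b^2*c^2 = 0 →
    (135)*a^4 + (-387)*a^3*b + (18)*a^3*c + (396)*a^2*b^2 + (-99)*a^2*b*c + (-90)*a^2*c^2 + (-171)*a*b^3 + (54)*a*b^2*c + (135)*a*b*c^2 + (-90)*a*c^3 + (27)*b^4 + (27)*b^3*c + (27)*b*c^3 + (27)*c^4 = 0 →
    (18)*a^3*b + (-36)*a^3*c + (180)*a^2*b^2 + (-234)*a^2*b*c + (72)*a^2*c^2 + (-306)*a*b^3 + (270)*a*b*c^2 + (-36)*a*c^3 + (108)*b^4 + (162)*b^3*c + (-54)*b*c^3 = 0 →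
    (135)*a^4 + (-63)*a^3*b + (18)*a^3*c + (216)*a^2*b^2 + (-135)*a^2*b*c + (54)*a^2*c^2 + (-135)*a*b^3 + (270)*a*b^2*c + (-189)*a*b*c^2 + (54)*a*c^3 + (27)*b^4 + (-81)*b^3*c + (108)*b^2*c^2 + (-81)*b*c^3 + (27)*c^4 = 0 →
    a = 0 ∧ b = 0 ∧ c = 0 := by decide

/-- Integral descent: the six homogeneous quartics have only the trivial integer solution. -/
lemma int_only_trivial : ∀ n : ℕ, ∀ a b c : ℤ, a.natAbs + b.natAbs + c.natAbs ≤ n →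
    (135)*a^2*b^2 + (-117)*a*b^3 + (54)*a*b^2*c + (54)*a*b*c^2 + (-36)*a*c^3 + (27)*b^4 + (81)*b^3*c + (81)*b^2*c^2 + (-54)*b*c^3 = 0 →
    (135)*a^4 + (-117)*a^3*b + (18)*a^3*c + (27)*a^2*b^2 + (-27)*a^2*b*c + (-54)*a^2*c^2 + (54)*a*b^2*c + (27)*a*b*c^2 + (54)*a*c^3 + (27)*b^2*c^2 + (-27)*b*c^3 + (27)*c^4 = 0 →
    (18)*a^3*b + (-36)*a^3*c + (81)*a^2*b^2 + (-162)*a^2*b*c + (-81)*a*b^3 + (162)*a*b^2*c + (27)*b^4 + (-27)*b^3*c + (27)*b^2*c^2 = 0 →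
    (135)*a^4 + (-387)*a^3*b + (18)*a^3*c + (396)*a^2*b^2 + (-99)*a^2*b*c + (-90)*a^2*c^2 + (-171)*a*b^3 + (54)*a*b^2*c + (135)*a*b*c^2 + (-90)*a*c^3 + (27)*b^4 + (27)*b^3*c + (27)*b*c^3 + (27)*c^4 = 0 →
    (18)*a^3*b + (-36)*a^3*c + (180)*a^2*b^2 + (-234)*a^2*b*c + (72)*a^2*c^2 + (-306)*a*b^3 + (270)*a*b*c^2 + (-36)*a*c^3 + (108)*b^4 + (162)*b^3*c + (-54)*b*c^3 = 0 →
    (135)*a^4 + (-63)*a^3*b + (18)*a^3*c + (216)*a^2*b^2 + (-135)*a^2*b*c + (54)*a^2*c^2 + (-135)*a*b^3 + (270)*a*b^2*c + (-189)*a*b*c^2 + (54)*a*c^3 + (27)*b^4 + (-81)*b^3*c + (108)*b^2*c^2 + (-81)*b*c^3 + (27)*c^4 = 0 →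
    a = 0 ∧ b = 0 ∧ c = 0 := by
  intro n
  induction n with
  | zero =>
    intro a b c hn _ _ _ _ _ _
    refine ⟨?_, ?_, ?_⟩ <;> omega
  | succ n ih =>
    intro a b c hn h1 h2 h3 h4 h5 h6
    by_cases hdvd : (7:ℤ) ∣ a ∧ (7:ℤ) ∣ b ∧ (7:ℤ) ∣ c
    · obtain ⟨⟨a', rfl⟩, ⟨b', rfl⟩, ⟨c', rfl⟩⟩ := hdvd
      by_cases hz : a' = 0 ∧ b' = 0 ∧ c' = 0
      · exact ⟨by simp [hz.1], by simp [hz.2.1], by simp [hz.2.2]⟩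
      · have hn' : a'.natAbs + b'.natAbs + c'.natAbs ≤ n := by
          have h7a : (7*a').natAbs = 7 * a'.natAbs := by
            simp [Int.natAbs_mul]
          have h7b : (7*b').natAbs = 7 * b'.natAbs := by
            simp [Int.natAbs_mul]
          have h7c : (7*c').natAbs = 7 * c'.natAbs := by
            simp [Int.natAbs_mul]
          have hpos : 1 ≤ a'.natAbs + b'.natAbs + c'.natAbs := by
            rcases not_and_or.mp hz with h | h
            · have := Int.natAbs_pos.mpr h; omega
            · rcases not_and_or.mp h with h | h
              · have := Int.natAbs_pos.mpr h; omega
              · have := Int.natAbs_pos.mpr h; omega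
          omega
        have e1 : (2401:ℤ) * ((135)*a'^2*b'^2 + (-117)*a'*b'^3 + (54)*a'*b'^2*c' + (54)*a'*b'*c'^2 + (-36)*a'*c'^3 + (27)*b'^4 + (81)*b'^3*c' + (81)*b'^2*c'^2 + (-54)*b'*c'^3) = 0 := by
          linear_combination h1
        have e2 : (2401:ℤ) * ((135)*a'^4 + (-117)*a'^3*b' + (18)*a'^3*c' + (27)*a'^2*b'^2 + (-27)*a'^2*b'*c' + (-54)*a'^2*c'^2 + (54)*a'*b'^2*c' + (27)*a'*b'*c'^2 + (54)*a'*c'^3 + (27)*b'^2*c'^2 + (-27)*b'*c'^3 + (27)*c'^4) = 0 := by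
          linear_combination h2
        have e3 : (2401:ℤ) * ((18)*a'^3*b' + (-36)*a'^3*c' + (81)*a'^2*b'^2 + (-162)*a'^2*b'*c' + (-81)*a'*b'^3 + (162)*a'*b'^2*c' + (27)*b'^4 + (-27)*b'^3*c' + (27)*b'^2*c'^2) = 0 := by
          linear_combination h3
        have e4 : (2401:ℤ) * ((135)*a'^4 + (-387)*a'^3*b' + (18)*a'^3*c' + (396)*a'^2*b'^2 + (-99)*a'^2*b'*c' + (-90)*a'^2*c'^2 + (-171)*a'*b'^3 + (54)*a'*b'^2*c' + (135)*a'*b'*c'^2 + (-90)*a'*c'^3 + (27)*b'^4 + (27)*b'^3*c' + (27)*b'*c'^3 + (27)*c'^4) = 0 := by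
          linear_combination h4
        have e5 : (2401:ℤ) * ((18)*a'^3*b' + (-36)*a'^3*c' + (180)*a'^2*b'^2 + (-234)*a'^2*b'*c' + (72)*a'^2*c'^2 + (-306)*a'*b'^3 + (270)*a'*b'*c'^2 + (-36)*a'*c'^3 + (108)*b'^4 + (162)*b'^3*c' + (-54)*b'*c'^3) = 0 := by
          linear_combination h5
        have e6 : (2401:ℤ) * ((135)*a'^4 + (-63)*a'^3*b' + (18)*a'^3*c' + (216)*a'^2*b'^2 + (-135)*a'^2*b'*c' + (54)*a'^2*c'^2 + (-135)*a'*b'^3 + (270)*a'*b'^2*c' + (-189)*a'*b'*c'^2 + (54)*a'*c'^3 + (27)*b'^4 + (-81)*b'^3*c' + (108)*b'^2*c'^2 + (-81)*b'*c'^3 + (27)*c'^4) = 0 := by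
          linear_combination h6
        have k1 := (mul_eq_zero.mp e1).resolve_left (by norm_num)
        have k2 := (mul_eq_zero.mp e2).resolve_left (by norm_num)
        have k3 := (mul_eq_zero.mp e3).resolve_left (by norm_num)
        have k4 := (mul_eq_zero.mp e4).resolve_left (by norm_num)
        have k5 := (mul_eq_zero.mp e5).resolve_left (by norm_num)
        have k6 := (mul_eq_zero.mp e6).resolve_left (by norm_num)
        obtain ⟨ha, hb, hc⟩ := ih a' b' c' hn' k1 k2 k3 k4 k5 k6
        exact ⟨by simp [ha], by simp [hb], by simp [hc]⟩
    · exfalso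
      have cast_eq : ∀ m : ℤ, m = 0 → ((m : ZMod 7) = 0) := by
        intro m hm; rw [hm]; exact Int.cast_zero
      have z1 := cast_eq _ h1
      have z2 := cast_eq _ h2
      have z3 := cast_eq _ h3
      have z4 := cast_eq _ h4
      have z5 := cast_eq _ h5
      have z6 := cast_eq _ h6
      push_cast at z1 z2 z3 z4 z5 z6
      obtain ⟨ha, hb, hc⟩ := zmod7_only_trivial (a : ZMod 7) (b : ZMod 7) (c : ZMod 7)
        (by linear_combination z1) (by linear_combination z2) (by linear_combination z3)
        (by linear_combination z4) (by linear_combination z5) (by linear_combination z6)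
      have da : (7:ℤ) ∣ a := by
        have := (ZMod.intCast_zmod_eq_zero_iff_dvd a 7).mp ha
        exact_mod_cast this
      have db : (7:ℤ) ∣ b := by
        have := (ZMod.intCast_zmod_eq_zero_iff_dvd b 7).mp hb
        exact_mod_cast this
      have dc : (7:ℤ) ∣ c := by
        have := (ZMod.intCast_zmod_eq_zero_iff_dvd c 7).mp hc
        exact_mod_cast this
      exact hdvd ⟨da, db, dc⟩

set_option maxHeartbeats 1600000 in
/-- The cup-product cubic forms `t_bl` and `t₂` are not equivalent under any invertible
`ℚ`-linear change of variables combined with a nonzero rational scaling; hence smooth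
members of `𝒳_bl` are not homeomorphic to smooth members of `𝒳(Δ₂)`. -/
theorem tbl_not_equivalent_to_t2 :
    ¬ ∃ (L : (Fin 3 → ℚ) ≃ₗ[ℚ] (Fin 3 → ℚ)) (lam : ℚ), lam ≠ 0 ∧
      ∀ x : Fin 3 → ℚ, tblForm x = lam * t2Form (L x) := by
  rintro ⟨L, lam, hlam, h⟩
  have hE : ∀ z : Fin 3 → ℚ, tblForm (L.symm z) = lam * t2Form z := by
    intro z
    have h0 := h (L.symm z)
    rwa [LinearEquiv.apply_symm_apply] at h0
  set w : Fin 3 → ℚ := L (Pi.single 2 1) with hwdef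
  have hNw : L.symm w = Pi.single 2 1 := L.symm_apply_apply _
  have hsingle0 : (Pi.single 2 1 : Fin 3 → ℚ) 0 = 0 := by
    simp [Pi.single_apply]
  have hsingle1 : (Pi.single 2 1 : Fin 3 → ℚ) 1 = 0 := by
    simp [Pi.single_apply]
  have hsingle2 : (Pi.single 2 1 : Fin 3 → ℚ) 2 = 1 := by
    simp [Pi.single_apply]
  -- the scalar relation lam * t2Form w = 1
  have hT3 : lam * ((1)*(w 0)^3 + (9/2)*(w 0)^2*(w 1) + (-9/2)*(w 0)*(w 1)^2 + (1)*(w 1)^3 + (-3/2)*(w 1)^2*(w 2) + (-3/2)*(w 1)*(w 2)^2 + (1)*(w 2)^3) = 1 := by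
    have h0 := hE w
    rw [hNw] at h0
    simp only [tblForm, t2Form, hsingle0, hsingle1, hsingle2] at h0
    linear_combination -h0
  -- the key polar identity, for every y
  have main : ∀ y : Fin 3 → ℚ,
      ((3)*(y 0)*(w 0)^2 + (9)*(y 0)*(w 0)*(w 1) + (-9/2)*(y 0)*(w 1)^2 + (9/2)*(y 1)*(w 0)^2 + (-9)*(y 1)*(w 0)*(w 1) + (3)*(y 1)*(w 1)^2 + (-3)*(y 1)*(w 1)*(w 2) + (-3/2)*(y 1)*(w 2)^2 + (-3/2)*(y 2)*(w 1)^2 + (-3)*(y 2)*(w 1)*(w 2) + (3)*(y 2)*(w 2)^2)^2 = 3 * ((1)*(w 0)^3 + (9/2)*(w 0)^2*(w 1) + (-9/2)*(w 0)*(w 1)^2 + (1)*(w 1)^3 + (-3/2)*(w 1)^2*(w 2) + (-3/2)*(w 1)*(w 2)^2 + (1)*(w 2)^3) * ((3)*(y 0)^2*(w 0) + (9/2)*(y 0)^2*(w 1) + (9)*(y 0)*(y 1)*(w 0) + (-9)*(y 0)*(y 1)*(w 1) + (-9/2)*(y 1)^2*(w 0) + (3)*(y 1)^2*(w 1) + (-3/2)*(y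 1)^2*(w 2) + (-3)*(y 1)*(y 2)*(w 1) + (-3)*(y 1)*(y 2)*(w 2) + (-3/2)*(y 2)^2*(w 1) + (3)*(y 2)^2*(w 2)) := by
    intro y
    have hs : ∀ s : ℚ,
        2/3*(L.symm y 0)^3 + 3*(L.symm y 0)^2*(L.symm y 1) - 3*(L.symm y 0)*(L.symm y 1)^2 + (L.symm y 1)^3 + (L.symm y 2 + s)^3
          = lam * ((y 0 + s * w 0)^3 + 9/2*(y 0 + s * w 0)^2*(y 1 + s * w 1) - 9/2*(y 0 + s * w 0)*(y 1 + s * w 1)^2 + (y 1 + s * w 1)^3 - 3/2*(y 1 + s * w 1)^2*(y 2 + s * w 2) - 3/2*(y 1 + s * w 1)*(y 2 + s * w 2)^2 + (y 2 + s * w 2)^3) := by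
      intro s
      have h0 := hE (y + s • w)
      rw [map_add, map_smul, hNw] at h0
      simp only [tblForm, t2Form, Pi.add_apply, Pi.smul_apply, smul_eq_mul,
        hsingle0, hsingle1, hsingle2, mul_zero, add_zero, mul_one] at h0
      linear_combination h0
    have e3 : lam * ((1)*(w 0)^3 + (9/2)*(w 0)^2*(w 1) + (-9/2)*(w 0)*(w 1)^2 + (1)*(w 1)^3 + (-3/2)*(w 1)^2*(w 2) + (-3/2)*(w 1)*(w 2)^2 + (1)*(w 2)^3) = 1 := by
      linear_combination (-1/6 : ℚ) * (hs 2 - 3*hs 1 + 3*hs 0 - hs (-1))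
    have e2 : lam * ((3)*(y 0)*(w 0)^2 + (9)*(y 0)*(w 0)*(w 1) + (-9/2)*(y 0)*(w 1)^2 + (9/2)*(y 1)*(w 0)^2 + (-9)*(y 1)*(w 0)*(w 1) + (3)*(y 1)*(w 1)^2 + (-3)*(y 1)*(w 1)*(w 2) + (-3/2)*(y 1)*(w 2)^2 + (-3/2)*(y 2)*(w 1)^2 + (-3)*(y 2)*(w 1)*(w 2) + (3)*(y 2)*(w 2)^2) = 3 * (L.symm y 2) := by
      linear_combination (-1/2 : ℚ) * (hs 1 + hs (-1) - 2*hs 0)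
    have e1 : lam * ((3)*(y 0)^2*(w 0) + (9/2)*(y 0)^2*(w 1) + (9)*(y 0)*(y 1)*(w 0) + (-9)*(y 0)*(y 1)*(w 1) + (-9/2)*(y 1)^2*(w 0) + (3)*(y 1)^2*(w 1) + (-3/2)*(y 1)^2*(w 2) + (-3)*(y 1)*(y 2)*(w 1) + (-3)*(y 1)*(y 2)*(w 2) + (-3/2)*(y 2)^2*(w 1) + (3)*(y 2)^2*(w 2)) = 3 * (L.symm y 2)^2 := by
      linear_combination (-1/2 : ℚ) * (hs 1 - hs (-1)) - e3
    have h0 : lam^2 * (((3)*(y 0)*(w 0)^2 + (9)*(y 0)*(w 0)*(w 1) + (-9/2)*(y 0)*(w 1)^2 + (9/2)*(y 1)*(w 0)^2 + (-9)*(y 1)*(w 0)*(w 1) + (3)*(y 1)*(w 1)^2 + (-3)*(y 1)*(w 1)*(w 2) + (-3/2)*(y 1)*(w 2)^2 + (-3/2)*(y 2)*(w 1)^2 + (-3)*(y 2)*(w 1)*(w 2) + (3)*(y 2)*(w 2)^2)^2 - 3 * ((1)*(w 0)^3 + (9/2)*(w 0)^2*(w 1) + (-9/2)*(w 0)*(w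 1)^2 + (1)*(w 1)^3 + (-3/2)*(w 1)^2*(w 2) + (-3/2)*(w 1)*(w 2)^2 + (1)*(w 2)^3) * ((3)*(y 0)^2*(w 0) + (9/2)*(y 0)^2*(w 1) + (9)*(y 0)*(y 1)*(w 0) + (-9)*(y 0)*(y 1)*(w 1) + (-9/2)*(y 1)^2*(w 0) + (3)*(y 1)^2*(w 1) + (-3/2)*(y 1)^2*(w 2) + (-3)*(y 1)*(y 2)*(w 1) + (-3)*(y 1)*(y 2)*(w 2) + (-3/2)*(y 2)^2*(w 1) + (3)*(y 2)^2*(w 2))) = 0 := by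
      linear_combination (lam * ((3)*(y 0)*(w 0)^2 + (9)*(y 0)*(w 0)*(w 1) + (-9/2)*(y 0)*(w 1)^2 + (9/2)*(y 1)*(w 0)^2 + (-9)*(y 1)*(w 0)*(w 1) + (3)*(y 1)*(w 1)^2 + (-3)*(y 1)*(w 1)*(w 2) + (-3/2)*(y 1)*(w 2)^2 + (-3/2)*(y 2)*(w 1)^2 + (-3)*(y 2)*(w 1)*(w 2) + (3)*(y 2)*(w 2)^2) + 3 * (L.symm y 2)) * e2
        - 3 * (lam * ((3)*(y 0)^2*(w 0) + (9/2)*(y 0)^2*(w 1) + (9)*(y 0)*(y 1)*(w 0) + (-9)*(y 0)*(y 1)*(w 1) + (-9/2)*(y 1)^2*(w 0) + (3)*(y 1)^2*(w 1) + (-3/2)*(y 1)^2*(w 2) + (-3)*(y 1)*(y 2)*(w 1) + (-3)*(y 1)*(y 2)*(w 2) + (-3/2)*(y 2)^2*(w 1) + (3)*(y 2)^2*(w 2))) * e3 - 3 * e1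
    have hl2 : lam^2 ≠ 0 := pow_ne_zero _ hlam
    have hz := (mul_eq_zero.mp h0).resolve_left hl2
    linarith [hz]
  -- instantiate at the six points
  have q1 := main ![(1:ℚ),0,0]
  simp only [Matrix.cons_val_zero, Matrix.cons_val_one, Matrix.head_cons,
    Matrix.cons_val_two, Matrix.tail_cons] at q1
  have q2 := main ![(0:ℚ),1,0]
  simp only [Matrix.cons_val_zero, Matrix.cons_val_one, Matrix.head_cons,
    Matrix.cons_val_two, Matrix.tail_cons] at q2
  have q3 := main ![(0:ℚ),0,1]
  simp only [Matrix.cons_val_zero, Matrix.cons_val_one, Matrix.head_cons,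
    Matrix.cons_val_two, Matrix.tail_cons] at q3
  have q4 := main ![(1:ℚ),1,0]
  simp only [Matrix.cons_val_zero, Matrix.cons_val_one, Matrix.head_cons,
    Matrix.cons_val_two, Matrix.tail_cons] at q4
  have q5 := main ![(1:ℚ),0,1]
  simp only [Matrix.cons_val_zero, Matrix.cons_val_one, Matrix.head_cons,
    Matrix.cons_val_two, Matrix.tail_cons] at q5
  have q6 := main ![(0:ℚ),1,1]
  simp only [Matrix.cons_val_zero, Matrix.cons_val_one, Matrix.head_cons,
    Matrix.cons_val_two, Matrix.tail_cons] at q6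
  -- clear denominators: w i = (integer)/(integer)
  set a : ℤ := (w 0).num * ((w 1).den : ℤ) * ((w 2).den : ℤ) with hadef
  set b : ℤ := ((w 0).den : ℤ) * (w 1).num * ((w 2).den : ℤ) with hbdef
  set c : ℤ := ((w 0).den : ℤ) * ((w 1).den : ℤ) * (w 2).num with hcdef
  set d : ℤ := ((w 0).den : ℤ) * ((w 1).den : ℤ) * ((w 2).den : ℤ) with hddef
  have hden0 : ((w 0).den : ℚ) ≠ 0 := by exact_mod_cast (w 0).den_nz
  have hden1 : ((w 1).den : ℚ) ≠ 0 := by exact_mod_cast (w 1).den_nz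
  have hden2 : ((w 2).den : ℚ) ≠ 0 := by exact_mod_cast (w 2).den_nz
  have hn0 : ((w 0).num : ℚ) = w 0 * ((w 0).den : ℚ) :=
    (div_eq_iff hden0).mp (Rat.num_div_den (w 0))
  have hn1 : ((w 1).num : ℚ) = w 1 * ((w 1).den : ℚ) :=
    (div_eq_iff hden1).mp (Rat.num_div_den (w 1))
  have hn2 : ((w 2).num : ℚ) = w 2 * ((w 2).den : ℚ) :=
    (div_eq_iff hden2).mp (Rat.num_div_den (w 2))
  have ha : (a : ℚ) = w 0 * (d : ℚ) := by
    rw [hadef, hddef]; push_cast; rw [hn0]; ring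
  have hb : (b : ℚ) = w 1 * (d : ℚ) := by
    rw [hbdef, hddef]; push_cast; rw [hn1]; ring
  have hc : (c : ℚ) = w 2 * (d : ℚ) := by
    rw [hcdef, hddef]; push_cast; rw [hn2]; ring
  have z1 : (135)*(a:ℚ)^2*(b:ℚ)^2 + (-117)*(a:ℚ)*(b:ℚ)^3 + (54)*(a:ℚ)*(b:ℚ)^2*(c:ℚ) + (54)*(a:ℚ)*(b:ℚ)*(c:ℚ)^2 + (-36)*(a:ℚ)*(c:ℚ)^3 + (27)*(b:ℚ)^4 + (81)*(b:ℚ)^3*(c:ℚ) + (81)*(b:ℚ)^2*(c:ℚ)^2 + (-54)*(b:ℚ)*(c:ℚ)^3 = 0 := by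
    rw [ha, hb, hc]; linear_combination (4*(d:ℚ)^4) * q1
  have zi1 : (135)*a^2*b^2 + (-117)*a*b^3 + (54)*a*b^2*c + (54)*a*b*c^2 + (-36)*a*c^3 + (27)*b^4 + (81)*b^3*c + (81)*b^2*c^2 + (-54)*b*c^3 = 0 := by exact_mod_cast z1
  have z2 : (135)*(a:ℚ)^4 + (-117)*(a:ℚ)^3*(b:ℚ) + (18)*(a:ℚ)^3*(c:ℚ) + (27)*(a:ℚ)^2*(b:ℚ)^2 + (-27)*(a:ℚ)^2*(b:ℚ)*(c:ℚ) + (-54)*(a:ℚ)^2*(c:ℚ)^2 + (54)*(a:ℚ)*(b:ℚ)^2*(c:ℚ) + (27)*(a:ℚ)*(b:ℚ)*(c:ℚ)^2 + (54)*(a:ℚ)*(c:ℚ)^3 + (27)*(b:ℚ)^2*(c:ℚ)^2 + (-27)*(b:ℚ)*(c:ℚ)^3 + (27)*(c:ℚ)^4 = 0 := by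
    rw [ha, hb, hc]; linear_combination (4*(d:ℚ)^4) * q2
  have zi2 : (135)*a^4 + (-117)*a^3*b + (18)*a^3*c + (27)*a^2*b^2 + (-27)*a^2*b*c + (-54)*a^2*c^2 + (54)*a*b^2*c + (27)*a*b*c^2 + (54)*a*c^3 + (27)*b^2*c^2 + (-27)*b*c^3 + (27)*c^4 = 0 := by exact_mod_cast z2
  have z3 : (18)*(a:ℚ)^3*(b:ℚ) + (-36)*(a:ℚ)^3*(c:ℚ) + (81)*(a:ℚ)^2*(b:ℚ)^2 + (-162)*(a:ℚ)^2*(b:ℚ)*(c:ℚ) + (-81)*(a:ℚ)*(b:ℚ)^3 + (162)*(a:ℚ)*(b:ℚ)^2*(c:ℚ) + (27)*(b:ℚ)^4 + (-27)*(b:ℚ)^3*(c:ℚ) + (27)*(b:ℚ)^2*(c:ℚ)^2 = 0 := by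
    rw [ha, hb, hc]; linear_combination (4*(d:ℚ)^4) * q3
  have zi3 : (18)*a^3*b + (-36)*a^3*c + (81)*a^2*b^2 + (-162)*a^2*b*c + (-81)*a*b^3 + (162)*a*b^2*c + (27)*b^4 + (-27)*b^3*c + (27)*b^2*c^2 = 0 := by exact_mod_cast z3
  have z4 : (135)*(a:ℚ)^4 + (-387)*(a:ℚ)^3*(b:ℚ) + (18)*(a:ℚ)^3*(c:ℚ) + (396)*(a:ℚ)^2*(b:ℚ)^2 + (-99)*(a:ℚ)^2*(b:ℚ)*(c:ℚ) + (-90)*(a:ℚ)^2*(c:ℚ)^2 + (-171)*(a:ℚ)*(b:ℚ)^3 + (54)*(a:ℚ)*(b:ℚ)^2*(c:ℚ) + (135)*(a:ℚ)*(b:ℚ)*(c:ℚ)^2 + (-90)*(a:ℚ)*(c:ℚ)^3 + (27)*(b:ℚ)^4 + (27)*(b:ℚ)^3*(c:ℚ) + (27)*(b:ℚ)*(c:ℚ)^3 + (27)*(c:ℚ)^4 = 0 := by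
    rw [ha, hb, hc]; linear_combination (4*(d:ℚ)^4) * q4
  have zi4 : (135)*a^4 + (-387)*a^3*b + (18)*a^3*c + (396)*a^2*b^2 + (-99)*a^2*b*c + (-90)*a^2*c^2 + (-171)*a*b^3 + (54)*a*b^2*c + (135)*a*b*c^2 + (-90)*a*c^3 + (27)*b^4 + (27)*b^3*c + (27)*b*c^3 + (27)*c^4 = 0 := by exact_mod_cast z4
  have z5 : (18)*(a:ℚ)^3*(b:ℚ) + (-36)*(a:ℚ)^3*(c:ℚ) + (180)*(a:ℚ)^2*(b:ℚ)^2 + (-234)*(a:ℚ)^2*(b:ℚ)*(c:ℚ) + (72)*(a:ℚ)^2*(c:ℚ)^2 + (-306)*(a:ℚ)*(b:ℚ)^3 + (270)*(a:ℚ)*(b:ℚ)*(c:ℚ)^2 + (-36)*(a:ℚ)*(c:ℚ)^3 + (108)*(b:ℚ)^4 + (162)*(b:ℚ)^3*(c:ℚ) + (-54)*(b:ℚ)*(c:ℚ)^3 = 0 := by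
    rw [ha, hb, hc]; linear_combination (4*(d:ℚ)^4) * q5
  have zi5 : (18)*a^3*b + (-36)*a^3*c + (180)*a^2*b^2 + (-234)*a^2*b*c + (72)*a^2*c^2 + (-306)*a*b^3 + (270)*a*b*c^2 + (-36)*a*c^3 + (108)*b^4 + (162)*b^3*c + (-54)*b*c^3 = 0 := by exact_mod_cast z5
  have z6 : (135)*(a:ℚ)^4 + (-63)*(a:ℚ)^3*(b:ℚ) + (18)*(a:ℚ)^3*(c:ℚ) + (216)*(a:ℚ)^2*(b:ℚ)^2 + (-135)*(a:ℚ)^2*(b:ℚ)*(c:ℚ) + (54)*(a:ℚ)^2*(c:ℚ)^2 + (-135)*(a:ℚ)*(b:ℚ)^3 + (270)*(a:ℚ)*(b:ℚ)^2*(c:ℚ) + (-189)*(a:ℚ)*(b:ℚ)*(c:ℚ)^2 + (54)*(a:ℚ)*(c:ℚ)^3 + (27)*(b:ℚ)^4 + (-81)*(b:ℚ)^3*(c:ℚ) + (108)*(b:ℚ)^2*(c:ℚ)^2 + (-81)*(b:ℚ)*(c:ℚ)^3 + (27)*(c:ℚ)^4 = 0 := by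
    rw [ha, hb, hc]; linear_combination (4*(d:ℚ)^4) * q6
  have zi6 : (135)*a^4 + (-63)*a^3*b + (18)*a^3*c + (216)*a^2*b^2 + (-135)*a^2*b*c + (54)*a^2*c^2 + (-135)*a*b^3 + (270)*a*b^2*c + (-189)*a*b*c^2 + (54)*a*c^3 + (27)*b^4 + (-81)*b^3*c + (108)*b^2*c^2 + (-81)*b*c^3 + (27)*c^4 = 0 := by exact_mod_cast z6
  obtain ⟨ha0, hb0, hc0⟩ := int_only_trivial (a.natAbs + b.natAbs + c.natAbs) a b c le_rfl
    zi1 zi2 zi3 zi4 zi5 zi6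
  have hdQ : (d : ℚ) ≠ 0 := by
    rw [hddef]; push_cast
    exact mul_ne_zero (mul_ne_zero hden0 hden1) hden2
  have hw0 : w 0 = 0 := by
    have : (a : ℚ) = 0 := by rw [ha0]; norm_num
    rw [ha] at this
    exact (mul_eq_zero.mp this).resolve_right hdQ
  have hw1 : w 1 = 0 := by
    have : (b : ℚ) = 0 := by rw [hb0]; norm_num
    rw [hb] at this
    exact (mul_eq_zero.mp this).resolve_right hdQ
  have hw2 : w 2 = 0 := by
    have : (c : ℚ) = 0 := by rw [hc0]; norm_num
    rw [hc] at this
    exact (mul_eq_zero.mp this).resolve_right hdQ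
  rw [hw0, hw1, hw2] at hT3
  norm_num at hT3
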